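/- arXiv:1210.6129 — 2 statements merged into one kernel-verified Lean document; each statement's English description precedes it below -/
import Mathlib

section
/- Let I be a finite index set and let h = (h_{cc'}) be a matrix indexed by a partially ordered set, lower unitriangular (h_{cc} = 1 and h_{cc'} = 0 unless c' ≤ c) with entries in ℤ[v,v⁻¹], satisfying \bar{h} = h⁻¹ where bar denotes the entrywise involution v ↦ v⁻¹. Then there exists a unique lower unitriangular matrix d = (d_{cc'}) with off-diagonal entries in v⁻¹ℤ[v⁻¹] such that d = \bar{d} h. -/
/-!
Fix a row `c` and write `v̄ h` for the row vector `x ↦ ∑ₑ invert (v e) * h e x`. Since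
`h̄ h = 1`, the map `v ↦ v̄ h` is an involution. The equation `v = v̄ h` is solved column by
column, going down the poset. At a column `x`, let `A = ∑_{e > x} v̄_e h_{ex}` be the
contribution of the columns already fixed; the equation at `x` reads `v_x - v̄_x = A`, and
applying the involution at `x` shows `Ā = -A`. Such an `A` is `p - p̄` for exactly one
`p ∈ v⁻¹ℤ[v⁻¹]`, namely the part of `A` in negative degrees, so `v_x = δ_{cx} + p` is forced
and does solve the equation.
-/

open LaurentPolynomial
open scoped Matrix

/-- The ring `ℤ[v,v⁻¹]` of Laurent polynomials with integer coefficients. -/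
abbrev L : Type := LaurentPolynomial ℤ

/-- The bar involution `v ↦ v⁻¹` applied entrywise to a matrix. -/
noncomputable def barMat {ι : Type*} (m : Matrix ι ι L) : Matrix ι ι L :=
  fun i j => invert (m i j)

/-- A matrix indexed by a poset is lower unitriangular if its diagonal entries are `1`
and the `(c,c')` entry vanishes unless `c' ≤ c`. -/
def Unitri {ι : Type*} [PartialOrder ι] (m : Matrix ι ι L) : Prop :=
  (∀ i, m i i = 1) ∧ ∀ i j, ¬ j ≤ i → m i j = 0

/-- A Laurent polynomial lies in `v⁻¹ℤ[v⁻¹]`, i.e. is supported on negative exponents. -/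
def NegPow (p : L) : Prop := ∀ k : ℤ, 0 ≤ k → p.coeff k = 0

noncomputable def negTrunc (p : L) : L :=
  AddMonoidAlgebra.ofCoeff (p.coeff.filter (· < 0))

lemma coeff_negTrunc (p : L) (k : ℤ) :
    (negTrunc p).coeff k = if k < 0 then p.coeff k else 0 :=
  Finsupp.filter_apply _ _ _

lemma negPow_negTrunc (p : L) : NegPow (negTrunc p) := fun k hk => by
  rw [coeff_negTrunc, if_neg (not_lt.mpr hk)]

lemma negTrunc_zero : negTrunc 0 = 0 := by
  ext k
  simp [coeff_negTrunc]

lemma negTrunc_sub_invert_negTrunc {q : L} (hq : invert q = -q) :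
    negTrunc q - invert (negTrunc q) = q := by
  have hsymm (k : ℤ) : q.coeff (-k) = -q.coeff k := by
    simpa using congrArg (fun p : L => p.coeff k) hq
  ext k
  rw [AddMonoidAlgebra.coeff_sub, Finsupp.sub_apply, invert_apply, coeff_negTrunc, coeff_negTrunc]
  rcases lt_trichotomy k 0 with hk | rfl | hk
  · rw [if_pos hk, if_neg (by omega), sub_zero]
  · have h0 : q.coeff 0 = 0 := by
      have := hsymm 0
      rw [neg_zero] at this
      omega
    simp [h0]
  · rw [if_neg (by omega), if_pos (by omega), hsymm k]
    ring

lemma eq_negTrunc_of_sub_invert_eq {p q : L} (hp : NegPow p) (hpq : p - invert p = q) :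
    p = negTrunc q := by
  ext k
  rw [coeff_negTrunc, ← hpq, AddMonoidAlgebra.coeff_sub, Finsupp.sub_apply, invert_apply]
  rcases lt_or_ge k 0 with hk | hk
  · rw [if_pos hk, hp (-k) (by omega), sub_zero]
  · rw [if_neg (not_lt.mpr hk), hp k hk]

lemma negPow_sub_one_apply {ι : Type*} [DecidableEq ι] {d : Matrix ι ι L}
    (hdiag : ∀ i, d i i = 1) (hoff : ∀ i j, i ≠ j → NegPow (d i j)) (i j : ι) :
    NegPow (d i j - (1 : Matrix ι ι L) i j) := by
  by_cases hij : i = j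
  · subst hij
    rw [hdiag, Matrix.one_apply_eq, sub_self]
    exact fun _ _ => rfl
  · rw [Matrix.one_apply_ne hij, sub_zero]
    exact hoff i j hij

lemma invert_one_apply {ι : Type*} [DecidableEq ι] (i j : ι) :
    invert ((1 : Matrix ι ι L) i j) = (1 : Matrix ι ι L) i j := by
  rw [Matrix.one_apply]
  split_ifs <;> simp

section BarVec

variable {ι : Type*}

noncomputable def barVec (v : ι → L) : ι → L := fun i => invert (v i)

lemma barVec_barVec (v : ι → L) : barVec (barVec v) = v :=
  funext fun i => involutive_invert (v i)

variable [Fintype ι]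

lemma barVec_vecMul (v : ι → L) (m : Matrix ι ι L) :
    barVec (v ᵥ* m) = barVec v ᵥ* barMat m := by
  ext j
  simp [barVec, barMat, Matrix.vecMul, dotProduct, map_sum]

lemma barMat_mul_apply (d m : Matrix ι ι L) (i j : ι) :
    (barMat d * m) i j = (barVec (d i) ᵥ* m) j :=
  rfl

lemma barVec_vecMul_barVec_vecMul [DecidableEq ι] {h : Matrix ι ι L} (hBar : barMat h * h = 1)
    (v : ι → L) : barVec (barVec v ᵥ* h) ᵥ* h = v := by
  rw [barVec_vecMul, barVec_barVec, Matrix.vecMul_vecMul, hBar, Matrix.vecMul_one]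

end BarVec

section Triangular

variable {ι : Type*} [Fintype ι] [PartialOrder ι] (h : Matrix ι ι L)

open Classical in
noncomputable def barVecMulAbove (v : ι → L) (x : ι) : L :=
  ∑ e ∈ {e | x < e}, invert (v e) * h e x

variable {h}

lemma barVecMulAbove_congr {v w : ι → L} {x : ι} (hvw : ∀ e, x < e → v e = w e) :
    barVecMulAbove h v x = barVecMulAbove h w x := by
  classical
  exact Finset.sum_congr rfl fun e he => by rw [hvw e (Finset.mem_filter.mp he).2]

lemma barVecMulAbove_eq_zero {v : ι → L} {x : ι} (hv : ∀ e, x < e → v e = 0) :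
    barVecMulAbove h v x = 0 := by
  classical
  exact Finset.sum_eq_zero fun e he => by
    rw [hv e (Finset.mem_filter.mp he).2, map_zero, zero_mul]

lemma barVec_vecMul_apply (hUni : Unitri h) (v : ι → L) (x : ι) :
    (barVec v ᵥ* h) x = invert (v x) + barVecMulAbove h v x := by
  classical
  rw [barVecMulAbove, Matrix.vecMul, dotProduct,
    ← Finset.sum_filter_add_sum_filter_not Finset.univ (x < ·), add_comm,
    Finset.sum_eq_single_of_mem x (by simp)]
  · rw [hUni.1, mul_one]
    rfl
  · intro e he hex
    have hxe : ¬ x ≤ e := fun hle =>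
      (Finset.mem_filter.mp he).2 (lt_of_le_of_ne hle (Ne.symm hex))
    rw [hUni.2 e x hxe, mul_zero]

lemma apply_eq_barVec_vecMul_apply_iff (hUni : Unitri h) (v : ι → L) (x : ι) :
    v x = (barVec v ᵥ* h) x ↔ v x - invert (v x) = barVecMulAbove h v x := by
  rw [barVec_vecMul_apply hUni]
  constructor <;> intro hv <;> linear_combination hv

lemma invert_barVecMulAbove [DecidableEq ι] (hUni : Unitri h) (hBar : barMat h * h = 1)
    {v : ι → L} {x : ι} (hv : ∀ e, x < e → v e = (barVec v ᵥ* h) e) :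
    invert (barVecMulAbove h v x) = -barVecMulAbove h v x := by
  have hinv := congrFun (barVec_vecMul_barVec_vecMul hBar v) x
  rw [barVec_vecMul_apply hUni, barVecMulAbove_congr (fun e he => (hv e he).symm),
    barVec_vecMul_apply hUni, map_add, involutive_invert] at hinv
  linear_combination hinv

end Triangular

section BarInvariantMatrix

variable {ι : Type*} [Fintype ι] [DecidableEq ι] [PartialOrder ι] (h : Matrix ι ι L)

open Classical in
noncomputable def barInvariantMatrix : Matrix ι ι L := fun c =>
  WellFoundedGT.fix fun x rec =>
    (1 : Matrix ι ι L) c x +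
      negTrunc (barVecMulAbove h (fun e => if hxe : x < e then rec e hxe else 0) x)

lemma barInvariantMatrix_apply (c x : ι) :
    barInvariantMatrix h c x =
      (1 : Matrix ι ι L) c x + negTrunc (barVecMulAbove h (barInvariantMatrix h c) x) := by
  rw [barInvariantMatrix, WellFoundedGT.fix_eq]
  congr 2
  exact barVecMulAbove_congr fun e hxe => dif_pos hxe

lemma barInvariantMatrix_apply_of_not_lt {c x : ι} (hxc : ¬ x < c) :
    barInvariantMatrix h c x = (1 : Matrix ι ι L) c x := by
  induction x using WellFoundedGT.induction with
  | _ x ih =>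
    have habove : ∀ e, x < e → barInvariantMatrix h c e = 0 := fun e hxe => by
      have hec : c ≠ e := by rintro rfl; exact hxc hxe
      rw [ih e hxe fun hlt => hxc (hxe.trans hlt), Matrix.one_apply_ne hec]
    rw [barInvariantMatrix_apply, barVecMulAbove_eq_zero habove, negTrunc_zero, add_zero]

lemma unitri_barInvariantMatrix : Unitri (barInvariantMatrix h) := by
  refine ⟨fun i => ?_, fun i j hji => ?_⟩
  · rw [barInvariantMatrix_apply_of_not_lt h (lt_irrefl i), Matrix.one_apply_eq]
  · rw [barInvariantMatrix_apply_of_not_lt h fun hlt => hji hlt.le,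
      Matrix.one_apply_ne fun hij => hji hij.ge]

lemma negPow_barInvariantMatrix_apply {i j : ι} (hij : i ≠ j) :
    NegPow (barInvariantMatrix h i j) := by
  rw [barInvariantMatrix_apply, Matrix.one_apply_ne hij, zero_add]
  exact negPow_negTrunc _

variable {h}

lemma barInvariantMatrix_eq_barMat_mul (hUni : Unitri h) (hBar : barMat h * h = 1) :
    barInvariantMatrix h = barMat (barInvariantMatrix h) * h := by
  funext c x
  rw [barMat_mul_apply]
  induction x using WellFoundedGT.induction with
  | _ x ih =>
    rw [apply_eq_barVec_vecMul_apply_iff hUni, barInvariantMatrix_apply, map_add, invert_one_apply]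
    linear_combination negTrunc_sub_invert_negTrunc (invert_barVecMulAbove hUni hBar ih)

lemma eq_barInvariantMatrix (hUni : Unitri h) {d : Matrix ι ι L}
    (hneg : ∀ i j, NegPow (d i j - (1 : Matrix ι ι L) i j)) (hd : d = barMat d * h) :
    d = barInvariantMatrix h := by
  funext c x
  induction x using WellFoundedGT.induction with
  | _ x ih =>
    have hrow := (apply_eq_barVec_vecMul_apply_iff hUni (d c) x).mp
      (by rw [← barMat_mul_apply, ← hd])
    have hx : d c x - (1 : Matrix ι ι L) c x =
        negTrunc (barVecMulAbove h (barInvariantMatrix h c) x) := by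
      refine eq_negTrunc_of_sub_invert_eq (hneg c x) ?_
      rw [map_sub, invert_one_apply, ← barVecMulAbove_congr ih]
      linear_combination hrow
    rw [barInvariantMatrix_apply]
    linear_combination hx

end BarInvariantMatrix

/-- Given a lower unitriangular matrix `h` over `ℤ[v,v⁻¹]` indexed by a finite poset,
with `h̄ = h⁻¹`, there is a unique lower unitriangular matrix `d` with off-diagonal
entries in `v⁻¹ℤ[v⁻¹]` such that `d = d̄ h`. -/
theorem exists_unique_bar_invariant_matrix {ι : Type*} [Fintype ι] [DecidableEq ι] [PartialOrder ι]
    (h : Matrix ι ι L) (hUni : Unitri h) (hBar : barMat h * h = 1) :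
    ∃! d : Matrix ι ι L,
      Unitri d ∧ (∀ i j, i ≠ j → NegPow (d i j)) ∧ d = barMat d * h := by
  refine ⟨barInvariantMatrix h, ⟨unitri_barInvariantMatrix h,
    fun i j => negPow_barInvariantMatrix_apply h,
    barInvariantMatrix_eq_barMat_mul hUni hBar⟩, ?_⟩
  rintro d ⟨⟨hdiag, -⟩, hoff, hd⟩
  exact eq_barInvariantMatrix hUni (negPow_sub_one_apply hdiag hoff) hd
end

section
/- The twisted Ringel–Hall algebra multiplication is associative: for modules over a finite-dimensional hereditary algebra Λ over a finite field with q elements, the product u_[M] * u_[N] = v_q^{⟨dim M, dim N⟩} Σ_[L] g^L_{MN} u_[L] on the free ℚ(v_q)-module with basis the isomorphism classes of finite-dimensional Λ-modules is associative with unit u_[0]. -/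
open scoped BigOperators

/-- The twisted Ringel–Hall multiplication on the free module with basis the set `M` of
isomorphism classes of modules: `u_A * u_B = v_q^{⟨dim A, dim B⟩} Σ_L g^L_{AB} u_L`,
extended bilinearly. Here `dim` is the class in the Grothendieck group `G`, `e` is the
Euler form and `hall L A B = g^L_{AB}`. -/
noncomputable def hallMul {K M G : Type*} [Field K] [AddCommGroup G]
    (vq : Kˣ) (dim : M → G) (e : G → G → ℤ) (hall : M → M → M → ℕ)
    (f g : M →₀ K) : M →₀ K :=
  f.sum fun A a => g.sum fun B b =>
    (a * b) • (((vq ^ e (dim A) (dim B) : Kˣ) : K) •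
      ∑ᶠ L, (hall L A B : K) • Finsupp.single L (1 : K))

/-!
Both sides of the associativity identity are trilinear, so it suffices to compare them on basis
elements. Up to powers of `v_q`, `(u_A u_B) u_C` and `u_A (u_B u_C)` are
`Σ_X (Σ_L g^L_{AB} g^X_{LC}) u_X` and `Σ_X (Σ_Y g^Y_{BC} g^X_{AY}) u_X`, which agree by
Riedtmann's identity. Since `dim` is additive on every extension that occurs, biadditivity of
the Euler form turns both powers into `v_q^{⟨A,B⟩ + ⟨A,C⟩ + ⟨B,C⟩}`. The unit laws follow
from `g^L_{0N} = g^L_{N0} = δ_{LN}` and `⟨0, -⟩ = ⟨-, 0⟩ = 0`.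
-/

section

open Finsupp

noncomputable def untwistedHallMul (K : Type*) {M : Type*} [Field K] (hall : M → M → M → ℕ)
    (A B : M) : M →₀ K :=
  ∑ᶠ L, (hall L A B : K) • single L 1

variable {K M G : Type*} [Field K]

section Untwisted

variable (hall : M → M → M → ℕ)

theorem untwistedHallMul_eq_sum {A B : M}
    (hAB : (Function.support fun L => hall L A B).Finite) :
    untwistedHallMul K hall A B = ∑ L ∈ hAB.toFinset, (hall L A B : K) • single L 1 :=
  finsum_eq_finsetSum_of_support_subset _ fun L hL =>
    hAB.mem_toFinset.2 fun h => hL (by simp [h])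

theorem untwistedHallMul_apply {A B : M} (hAB : (Function.support fun L => hall L A B).Finite)
    (X : M) : untwistedHallMul K hall A B X = hall X A B := by
  classical
  rw [untwistedHallMul_eq_sum hall hAB, Finset.sum_apply']
  simp only [Finsupp.smul_apply, single_apply, smul_eq_mul, mul_ite, mul_one, mul_zero,
    Finset.sum_ite_eq', Set.Finite.mem_toFinset, Function.mem_support, ite_not]
  split_ifs with h <;> simp [h]

theorem untwistedHallMul_unit_left [DecidableEq M] {O : M}
    (hOl : ∀ L N, hall L O N = if L = N then 1 else 0) (B : M) :
    untwistedHallMul K hall O B = single B 1 := by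
  rw [untwistedHallMul, finsum_eq_single _ B fun L hL => by simp [hOl, hL]]
  simp [hOl]

theorem untwistedHallMul_unit_right [DecidableEq M] {O : M}
    (hOr : ∀ L N, hall L N O = if L = N then 1 else 0) (A : M) :
    untwistedHallMul K hall A O = single A 1 := by
  rw [untwistedHallMul, finsum_eq_single _ A fun L hL => by simp [hOr, hL]]
  simp [hOr]

theorem untwistedHallMul_assoc (hfin : ∀ A B, (Function.support fun L => hall L A B).Finite)
    (hried : ∀ L A B C, (∑ᶠ X, hall X A B * hall L X C) = ∑ᶠ Y, hall Y B C * hall L A Y)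
    (A B C : M) :
    ∑ L ∈ (hfin A B).toFinset, (hall L A B : K) • untwistedHallMul K hall L C =
      ∑ Y ∈ (hfin B C).toFinset, (hall Y B C : K) • untwistedHallMul K hall A Y := by
  ext X
  simp only [Finset.sum_apply', Finsupp.smul_apply, untwistedHallMul_apply hall (hfin _ _),
    smul_eq_mul]
  have hnat : ∑ L ∈ (hfin A B).toFinset, hall L A B * hall X L C =
      ∑ Y ∈ (hfin B C).toFinset, hall Y B C * hall X A Y := by
    rw [← finsum_eq_finsetSum_of_support_subset _ fun L hL =>
        (hfin A B).mem_toFinset.2 (left_ne_zero_of_mul hL),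
      ← finsum_eq_finsetSum_of_support_subset _ fun Y hY =>
        (hfin B C).mem_toFinset.2 (left_ne_zero_of_mul hY), hried]
  simpa using congrArg (Nat.cast : ℕ → K) hnat

end Untwisted

section Twisted

variable (vq : Kˣ) (dim : M → G) (e : G → G → ℤ) (hall : M → M → M → ℕ)

noncomputable def hallMulBilin : (M →₀ K) →ₗ[K] (M →₀ K) →ₗ[K] M →₀ K :=
  linearCombination K fun A => linearCombination K fun B =>
    ((vq ^ e (dim A) (dim B) : Kˣ) : K) • untwistedHallMul K hall A B

theorem hallMul_eq_hallMulBilin [AddCommGroup G] (f g : M →₀ K) :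
    hallMul vq dim e hall f g = hallMulBilin vq dim e hall f g := by
  simp only [hallMul, hallMulBilin, untwistedHallMul, linearCombination_apply,
    LinearMap.finsupp_sum_apply, LinearMap.smul_apply, smul_sum, smul_smul, mul_assoc]

theorem hallMulBilin_single_single (A B : M) :
    hallMulBilin vq dim e hall (single A 1) (single B 1) =
      ((vq ^ e (dim A) (dim B) : Kˣ) : K) • untwistedHallMul K hall A B := by
  simp [hallMulBilin]

variable [AddCommGroup G]

theorem hallMulBilin_untwistedHallMul_single
    (hdim : ∀ L A B, hall L A B ≠ 0 → dim L = dim A + dim B)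
    (heL : ∀ x y z : G, e (x + y) z = e x z + e y z) {A B : M}
    (hAB : (Function.support fun L => hall L A B).Finite) (C : M) :
    hallMulBilin vq dim e hall (untwistedHallMul K hall A B) (single C 1) =
      ((vq ^ (e (dim A) (dim C) + e (dim B) (dim C)) : Kˣ) : K) •
        ∑ L ∈ hAB.toFinset, (hall L A B : K) • untwistedHallMul K hall L C := by
  rw [untwistedHallMul_eq_sum hall hAB, map_sum, LinearMap.sum_apply, Finset.smul_sum]
  refine Finset.sum_congr rfl fun L hL => ?_
  rw [map_smul, LinearMap.smul_apply, hallMulBilin_single_single,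
    hdim L A B (hAB.mem_toFinset.1 hL), heL, smul_comm]

theorem hallMulBilin_single_untwistedHallMul
    (hdim : ∀ L A B, hall L A B ≠ 0 → dim L = dim A + dim B)
    (heR : ∀ x y z : G, e x (y + z) = e x y + e x z) (A : M) {B C : M}
    (hBC : (Function.support fun L => hall L B C).Finite) :
    hallMulBilin vq dim e hall (single A 1) (untwistedHallMul K hall B C) =
      ((vq ^ (e (dim A) (dim B) + e (dim A) (dim C)) : Kˣ) : K) •
        ∑ Y ∈ hBC.toFinset, (hall Y B C : K) • untwistedHallMul K hall A Y := by
  rw [untwistedHallMul_eq_sum hall hBC, map_sum, Finset.smul_sum]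
  refine Finset.sum_congr rfl fun Y hY => ?_
  rw [map_smul, hallMulBilin_single_single, hdim Y B C (hBC.mem_toFinset.1 hY), heR, smul_comm]

theorem hallMulBilin_assoc (hfin : ∀ A B, (Function.support fun L => hall L A B).Finite)
    (hdim : ∀ L A B, hall L A B ≠ 0 → dim L = dim A + dim B)
    (heL : ∀ x y z : G, e (x + y) z = e x z + e y z)
    (heR : ∀ x y z : G, e x (y + z) = e x y + e x z)
    (hried : ∀ L A B C, (∑ᶠ X, hall X A B * hall L X C) = ∑ᶠ Y, hall Y B C * hall L A Y)
    (f g h : M →₀ K) :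
    hallMulBilin vq dim e hall (hallMulBilin vq dim e hall f g) h =
      hallMulBilin vq dim e hall f (hallMulBilin vq dim e hall g h) := by
  set μ := hallMulBilin vq dim e hall
  suffices μ.compr₂ μ = (LinearMap.llcomp K _ _ _ ∘ₗ μ).compl₂ μ from congr($this f g h)
  ext A B C : 6
  simp only [LinearMap.compr₂_apply, LinearMap.compl₂_apply, LinearMap.comp_apply,
    LinearMap.llcomp_apply, lsingle_apply]
  rw [hallMulBilin_single_single, hallMulBilin_single_single, map_smul, LinearMap.smul_apply,
    map_smul, hallMulBilin_untwistedHallMul_single vq dim e hall hdim heL (hfin A B),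
    hallMulBilin_single_untwistedHallMul vq dim e hall hdim heR A (hfin B C), smul_smul,
    smul_smul, untwistedHallMul_assoc hall hfin hried]
  congr 1
  simp only [← Units.val_mul, ← zpow_add]
  ring_nf

theorem hallMulBilin_unit_left (heL : ∀ x y z : G, e (x + y) z = e x z + e y z)
    [DecidableEq M] {O : M} (hO : dim O = 0) (hOl : ∀ L N, hall L O N = if L = N then 1 else 0)
    (f : M →₀ K) : hallMulBilin vq dim e hall (single O 1) f = f := by
  have he : ∀ z, e 0 z = 0 := fun z => by simpa using heL 0 0 z
  suffices hallMulBilin vq dim e hall (single O 1) = LinearMap.id from congr($this f)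
  ext B : 2
  simp [hallMulBilin_single_single, hO, he, untwistedHallMul_unit_left hall hOl]

theorem hallMulBilin_unit_right (heR : ∀ x y z : G, e x (y + z) = e x y + e x z)
    [DecidableEq M] {O : M} (hO : dim O = 0) (hOr : ∀ L N, hall L N O = if L = N then 1 else 0)
    (f : M →₀ K) : hallMulBilin vq dim e hall f (single O 1) = f := by
  have he : ∀ x, e x 0 = 0 := fun x => by simpa using heR x 0 0
  suffices (hallMulBilin vq dim e hall).flip (single O 1) = LinearMap.id from congr($this f)
  ext A : 2
  simp [hallMulBilin_single_single, hO, he, untwistedHallMul_unit_right hall hOr]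

end Twisted

end

/-- The twisted Ringel–Hall algebra is an associative algebra with unit `u_[0]`:
assuming the standard properties of Hall numbers — finite support, additivity of the
class in the Grothendieck group on extensions, biadditivity of the Euler form,
Riedtmann's associativity of the untwisted Hall numbers, and the behaviour of the zero
module `O` — the twisted multiplication is associative with unit `u_O`. -/
theorem hallMul_assoc_and_unital {K M G : Type*} [Field K] [AddCommGroup G] [DecidableEq M]
    (vq : Kˣ) (dim : M → G) (e : G → G → ℤ) (hall : M → M → M → ℕ)
    (hfin : ∀ A B, (Function.support fun L => hall L A B).Finite)
    (hdim : ∀ L A B, hall L A B ≠ 0 → dim L = dim A + dim B)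
    (heL : ∀ x y z : G, e (x + y) z = e x z + e y z)
    (heR : ∀ x y z : G, e x (y + z) = e x y + e x z)
    (hried : ∀ L A B C, (∑ᶠ X, hall X A B * hall L X C) = ∑ᶠ Y, hall Y B C * hall L A Y)
    (O : M) (hO : dim O = 0)
    (hOl : ∀ L N, hall L O N = if L = N then 1 else 0)
    (hOr : ∀ L N, hall L N O = if L = N then 1 else 0) :
    (∀ f g h : M →₀ K,
        hallMul vq dim e hall (hallMul vq dim e hall f g) h =
          hallMul vq dim e hall f (hallMul vq dim e hall g h)) ∧
      (∀ f : M →₀ K, hallMul vq dim e hall (Finsupp.single O 1) f = f) ∧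
      (∀ f : M →₀ K, hallMul vq dim e hall f (Finsupp.single O 1) = f) := by
  simp only [hallMul_eq_hallMulBilin]
  exact ⟨hallMulBilin_assoc vq dim e hall hfin hdim heL heR hried,
    hallMulBilin_unit_left vq dim e hall heL hO hOl,
    hallMulBilin_unit_right vq dim e hall heR hO hOr⟩
end
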